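/- arXiv:1003.2045 — 2 statements merged into one kernel-verified Lean document; each statement's English description precedes it below -/
import Mathlib

section
/- Let x be a unit speed spacelike curve in Minkowski 4-space E₁⁴ with Frenet frame {T, N, B₁, B₂}, nowhere-vanishing curvatures k₁, k₂, k₃ and signs ε₁ = +1, ε₂ ∈ {−1,1}. Let U ∈ ℝ⁴ be a constant vector such that s ↦ ⟪B₂(s), U⟫ is constant, and set a₁(s) = ⟪U, T(s)⟫. Then there exist constants A, B ∈ ℝ such that a₁(s) = A cos(∫₀ˢ k₁(t) dt) + B sin(∫₀ˢ k₁(t) dt) for all s. -/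
/-- The Minkowski bilinear form on `ℝ⁴`: `⟪v,w⟫ = -v₀w₀ + v₁w₁ + v₂w₂ + v₃w₃`. -/
noncomputable def mink (v w : Fin 4 → ℝ) : ℝ :=
  -(v 0 * w 0) + v 1 * w 1 + v 2 * w 2 + v 3 * w 3

/-- A unit speed spacelike curve in Minkowski 4-space `E₁⁴` together with a Frenet
frame `{T, N, B₁, B₂}`, nowhere-vanishing curvatures `k₁, k₂, k₃` and signs `ε₁, ε₂`. -/
structure SpacelikeFrenetCurve where
  x : ℝ → Fin 4 → ℝ
  T : ℝ → Fin 4 → ℝ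
  N : ℝ → Fin 4 → ℝ
  B₁ : ℝ → Fin 4 → ℝ
  B₂ : ℝ → Fin 4 → ℝ
  k₁ : ℝ → ℝ
  k₂ : ℝ → ℝ
  k₃ : ℝ → ℝ
  ε₁ : ℝ
  ε₂ : ℝ
  smooth_x : ContDiff ℝ (⊤ : ℕ∞) x
  smooth_T : ContDiff ℝ (⊤ : ℕ∞) T
  smooth_N : ContDiff ℝ (⊤ : ℕ∞) N
  smooth_B₁ : ContDiff ℝ (⊤ : ℕ∞) B₁
  smooth_B₂ : ContDiff ℝ (⊤ : ℕ∞) B₂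
  smooth_k₁ : ContDiff ℝ (⊤ : ℕ∞) k₁
  smooth_k₂ : ContDiff ℝ (⊤ : ℕ∞) k₂
  smooth_k₃ : ContDiff ℝ (⊤ : ℕ∞) k₃
  k₁_ne : ∀ s, k₁ s ≠ 0
  k₂_ne : ∀ s, k₂ s ≠ 0
  k₃_ne : ∀ s, k₃ s ≠ 0
  ε₁_sign : ε₁ = 1 ∨ ε₁ = -1
  ε₂_sign : ε₂ = 1 ∨ ε₂ = -1
  tangent : ∀ s, deriv x s = T s
  TT : ∀ s, mink (T s) (T s) = 1
  NN : ∀ s, mink (N s) (N s) = ε₁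
  B₁B₁ : ∀ s, mink (B₁ s) (B₁ s) = -(ε₁ * ε₂)
  B₂B₂ : ∀ s, mink (B₂ s) (B₂ s) = ε₂
  TN : ∀ s, mink (T s) (N s) = 0
  TB₁ : ∀ s, mink (T s) (B₁ s) = 0
  TB₂ : ∀ s, mink (T s) (B₂ s) = 0
  NB₁ : ∀ s, mink (N s) (B₁ s) = 0
  NB₂ : ∀ s, mink (N s) (B₂ s) = 0
  B₁B₂ : ∀ s, mink (B₁ s) (B₂ s) = 0
  frenet_T : ∀ s, deriv T s = k₁ s • N s
  frenet_N : ∀ s, deriv N s = (-(ε₁ * k₁ s)) • T s + k₂ s • B₁ s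
  frenet_B₁ : ∀ s, deriv B₁ s = (ε₂ * k₂ s) • N s + k₃ s • B₂ s
  frenet_B₂ : ∀ s, deriv B₂ s = (ε₁ * k₃ s) • B₁ s

/-- `x` is a `B₂`-slant helix: a nonzero constant vector `U` makes a constant
"angle" with the second binormal, i.e. `s ↦ ⟪B₂ s, U⟫` is constant. -/
def IsB₂SlantHelix (c : SpacelikeFrenetCurve) : Prop :=
  ∃ U : Fin 4 → ℝ, U ≠ 0 ∧ ∃ C : ℝ, ∀ s : ℝ, mink (c.B₂ s) U = C

lemma mink_comm (v w : Fin 4 → ℝ) : mink v w = mink w v := by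
  simp [mink]; ring

lemma hasDerivAt_mink {U : Fin 4 → ℝ} {f : ℝ → Fin 4 → ℝ} {f' : Fin 4 → ℝ} {s : ℝ}
    (hf : HasDerivAt f f' s) :
    HasDerivAt (fun t => mink U (f t)) (mink U f') s := by
  have h0 := hasDerivAt_pi.1 hf 0
  have h1 := hasDerivAt_pi.1 hf 1
  have h2 := hasDerivAt_pi.1 hf 2
  have h3 := hasDerivAt_pi.1 hf 3
  have := ((((h0.const_mul (U 0)).neg).add (h1.const_mul (U 1))).add
    (h2.const_mul (U 2))).add (h3.const_mul (U 3))
  convert this using 1 <;> (try rfl) <;> simp [mink] <;> ring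

/-- Case `ε₁ = +1`: `a₁ = ⟪U, T⟫` has the form
`A cos(∫₀ˢ k₁) + B sin(∫₀ˢ k₁)` for some constants `A, B`. -/
theorem stmt5 (c : SpacelikeFrenetCurve) (hε : c.ε₁ = 1)
    (U : Fin 4 → ℝ) (C : ℝ) (hU : ∀ s : ℝ, mink (c.B₂ s) U = C) :
    ∃ A B : ℝ, ∀ s : ℝ, mink U (c.T s) =
      A * Real.cos (∫ t in (0:ℝ)..s, c.k₁ t) +
      B * Real.sin (∫ t in (0:ℝ)..s, c.k₁ t) := by
  classical
  set a1 : ℝ → ℝ := fun s => mink U (c.T s) with ha1def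
  set a2 : ℝ → ℝ := fun s => mink U (c.N s) with ha2def
  set b1 : ℝ → ℝ := fun s => mink U (c.B₁ s) with hb1def
  -- derivative facts for the frame
  have hT : ∀ s, HasDerivAt c.T (c.k₁ s • c.N s) s := fun s => by
    have h := (c.smooth_T.differentiable (by simp) s).hasDerivAt
    rwa [c.frenet_T s] at h
  have hN : ∀ s, HasDerivAt c.N ((-(c.ε₁ * c.k₁ s)) • c.T s + c.k₂ s • c.B₁ s) s := fun s => by
    have h := (c.smooth_N.differentiable (by simp) s).hasDerivAt
    rwa [c.frenet_N s] at h
  have hB₂ : ∀ s, HasDerivAt c.B₂ ((c.ε₁ * c.k₃ s) • c.B₁ s) s := fun s => by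
    have h := (c.smooth_B₂.differentiable (by simp) s).hasDerivAt
    rwa [c.frenet_B₂ s] at h
  -- b1 = 0
  have hb1 : ∀ s, b1 s = 0 := by
    intro s
    have hd : HasDerivAt (fun t => mink U (c.B₂ t)) (c.k₃ s * b1 s) s := by
      have := hasDerivAt_mink (U := U) (hB₂ s)
      convert this using 1
      simp [mink, b1, hε, Pi.smul_apply, smul_eq_mul]; ring
    have hconst : (fun t => mink U (c.B₂ t)) = fun _ => C := by
      funext t; rw [mink_comm]; exact hU t
    have : c.k₃ s * b1 s = 0 := by
      have := hd.deriv
      rw [hconst] at this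
      simpa using this.symm
    exact (mul_eq_zero.1 this).resolve_left (c.k₃_ne s)
  -- derivatives of a1 and a2
  have ha1 : ∀ s, HasDerivAt a1 (c.k₁ s * a2 s) s := fun s => by
    have := hasDerivAt_mink (U := U) (hT s)
    convert this using 1
    simp [mink, a2, Pi.smul_apply, smul_eq_mul]; ring
  have ha2 : ∀ s, HasDerivAt a2 (-(c.k₁ s) * a1 s) s := fun s => by
    have h := hasDerivAt_mink (U := U) (hN s)
    have heq : mink U ((-(c.ε₁ * c.k₁ s)) • c.T s + c.k₂ s • c.B₁ s)
        = -(c.k₁ s) * a1 s + c.k₂ s * b1 s := by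
      simp [mink, a1, b1, hε, Pi.add_apply, Pi.smul_apply, smul_eq_mul]; ring
    rw [heq, hb1 s, mul_zero, add_zero] at h
    exact h
  -- the angle function
  set θ : ℝ → ℝ := fun s => ∫ t in (0:ℝ)..s, c.k₁ t with hθdef
  have hk₁c : Continuous c.k₁ := c.smooth_k₁.continuous
  have hθ : ∀ s, HasDerivAt θ (c.k₁ s) s := fun s =>
    intervalIntegral.integral_hasDerivAt_right (hk₁c.intervalIntegrable 0 s)
      (hk₁c.stronglyMeasurable.stronglyMeasurableAtFilter) hk₁c.continuousAt
  set A : ℝ := a1 0 with hA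
  set B : ℝ := a2 0 with hB
  set g : ℝ → ℝ := fun s => a1 s - (A * Real.cos (θ s) + B * Real.sin (θ s)) with hgdef
  set h : ℝ → ℝ := fun s => a2 s - (-A * Real.sin (θ s) + B * Real.cos (θ s)) with hhdef
  have hcos : ∀ s, HasDerivAt (fun t => Real.cos (θ t)) (-Real.sin (θ s) * c.k₁ s) s :=
    fun s => (Real.hasDerivAt_cos (θ s)).comp s (hθ s)
  have hsin : ∀ s, HasDerivAt (fun t => Real.sin (θ t)) (Real.cos (θ s) * c.k₁ s) s :=
    fun s => (Real.hasDerivAt_sin (θ s)).comp s (hθ s)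
  have hg : ∀ s, HasDerivAt g (c.k₁ s * h s) s := fun s => by
    have := (ha1 s).sub (((hcos s).const_mul A).add ((hsin s).const_mul B))
    convert this using 1 <;> try rfl
    simp [h]; ring
  have hh : ∀ s, HasDerivAt h (-(c.k₁ s) * g s) s := fun s => by
    have := (ha2 s).sub (((hsin s).const_mul (-A)).add ((hcos s).const_mul B))
    convert this using 1 <;> try rfl
    simp [g]; ring
  set F : ℝ → ℝ := fun s => g s * g s + h s * h s with hFdef
  have hF : ∀ s, HasDerivAt F 0 s := fun s => by
    have := ((hg s).mul (hg s)).add ((hh s).mul (hh s))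
    convert this using 1 <;> try rfl
    ring
  have hFconst : ∀ s, F s = F 0 := fun s =>
    is_const_of_deriv_eq_zero (fun t => (hF t).differentiableAt)
      (fun t => (hF t).deriv) s 0
  have hθ0 : θ 0 = 0 := intervalIntegral.integral_same
  have hF0 : F 0 = 0 := by simp [F, g, h, hθ0, hA, hB]
  refine ⟨A, B, fun s => ?_⟩
  have hFs : g s * g s + h s * h s = 0 := (hFconst s).trans hF0
  have hgs : g s = 0 := by nlinarith [sq_nonneg (g s), sq_nonneg (h s)]
  have : a1 s - (A * Real.cos (θ s) + B * Real.sin (θ s)) = 0 := hgs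
  have := sub_eq_zero.1 this
  simpa [a1, θ] using this
end

section
/- Let x be a unit speed spacelike curve in Minkowski 4-space E₁⁴ with Frenet frame {T, N, B₁, B₂}, nowhere-vanishing curvatures k₁, k₂, k₃ and signs ε₁, ε₂ ∈ {−1,1}. If x is a B₂-slant helix, then the function f(s) := ε₁ (1/k₁(s)) (k₃/k₂)'(s) satisfies f(s) k₁(s) = ε₁ (k₃/k₂)'(s) and f'(s) = −k₁(s) · (k₃(s)/k₂(s)) for all s. -/
lemma mink_smul_left (a : ℝ) (v w : Fin 4 → ℝ) : mink (a • v) w = a * mink v w := by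
  simp [mink]; ring

lemma mink_add_left (u v w : Fin 4 → ℝ) : mink (u + v) w = mink u w + mink v w := by
  simp [mink]; ring

lemma hasDerivAt_mink_left {g : ℝ → Fin 4 → ℝ} {g' : Fin 4 → ℝ} {s : ℝ}
    (hg : HasDerivAt g g' s) (U : Fin 4 → ℝ) :
    HasDerivAt (fun t => mink (g t) U) (mink g' U) s := by
  have h := hasDerivAt_pi.mp hg
  unfold mink
  exact ((((h 0).mul_const (U 0)).neg.add ((h 1).mul_const (U 1))).add
    ((h 2).mul_const (U 2))).add ((h 3).mul_const (U 3))

lemma frame_nondeg {t n b1 b2 U : Fin 4 → ℝ} {e1 e2 : ℝ}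
    (he1 : e1 = 1 ∨ e1 = -1) (he2 : e2 = 1 ∨ e2 = -1)
    (htt : mink t t = 1) (hnn : mink n n = e1) (hb1 : mink b1 b1 = -(e1*e2))
    (hb2 : mink b2 b2 = e2)
    (htn : mink t n = 0) (htb1 : mink t b1 = 0) (htb2 : mink t b2 = 0)
    (hnb1 : mink n b1 = 0) (hnb2 : mink n b2 = 0) (hb12 : mink b1 b2 = 0)
    (hUt : mink t U = 0) (hUn : mink n U = 0) (hUb1 : mink b1 U = 0)
    (hUb2 : mink b2 U = 0) : U = 0 := by
  classical
  set M : Matrix (Fin 4) (Fin 4) ℝ := Matrix.of ![t, n, b1, b2] with hM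
  set η : Matrix (Fin 4) (Fin 4) ℝ := Matrix.diagonal ![-1, 1, 1, 1] with hη
  have hentry : ∀ i j : Fin 4, (M * η * M.transpose) i j = mink (M i) (M j) := by
    intro i j
    rw [Matrix.mul_apply]
    simp only [Matrix.transpose_apply, hη, Matrix.mul_diagonal]
    rw [Fin.sum_univ_four]
    simp [mink]
  have key : M * η * M.transpose = Matrix.diagonal ![1, e1, -(e1*e2), e2] := by
    ext i j
    rw [hentry]
    fin_cases i <;> fin_cases j <;>
      simp only [hM, Matrix.of_apply, Matrix.cons_val_zero, Matrix.cons_val_one,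
        Matrix.head_cons, Matrix.cons_val_two, Matrix.tail_cons, Matrix.cons_val_three,
        Matrix.head_fin_const] <;>
      first
        | assumption
        | (rw [mink_comm]; assumption)
  have hdet : M.det * (-1) * M.det = -1 := by
    have h1 : (M * η * M.transpose).det = M.det * η.det * M.det := by
      rw [Matrix.det_mul, Matrix.det_mul, Matrix.det_transpose]
    rw [key] at h1
    have hηd : η.det = -1 := by simp [hη, Matrix.det_diagonal, Fin.prod_univ_four]
    have hd2 : (Matrix.diagonal ![(1:ℝ), e1, -(e1*e2), e2]).det = -1 := by
      rw [Matrix.det_diagonal, Fin.prod_univ_four]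
      rcases he1 with h|h <;> rcases he2 with h'|h' <;> simp [h, h'] <;> ring
    rw [hd2, hηd] at h1
    linarith [h1]
  have hunit : IsUnit M := by
    rw [Matrix.isUnit_iff_isUnit_det]
    have : M.det ≠ 0 := by intro h0; rw [h0] at hdet; norm_num at hdet
    exact this.isUnit
  set V : Fin 4 → ℝ := ![-(U 0), U 1, U 2, U 3] with hV
  have hMV : M.mulVec V = M.mulVec 0 := by
    rw [Matrix.mulVec_zero]
    funext i
    fin_cases i <;>
      · simp [hM, hV, Matrix.mulVec, dotProduct, Fin.sum_univ_four]
        simp [mink] at hUt hUn hUb1 hUb2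
        linarith
  have hV0 : V = 0 := Matrix.mulVec_injective_iff_isUnit.mpr hunit hMV
  have h0 := congrFun hV0 0
  have h1 := congrFun hV0 1
  have h2 := congrFun hV0 2
  have h3 := congrFun hV0 3
  simp [hV] at h0 h1 h2 h3
  funext i
  fin_cases i <;> simp [h0, h1, h2, h3]


/-- If `x` is a `B₂`-slant helix, the function `f = ε₁ (1/k₁)(k₃/k₂)'` satisfies
`f k₁ = ε₁ (k₃/k₂)'` and `f' = −k₁ (k₃/k₂)`. -/
theorem stmt12 (c : SpacelikeFrenetCurve) (h : IsB₂SlantHelix c)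
    (f : ℝ → ℝ)
    (hf : ∀ s : ℝ, f s = c.ε₁ * (1 / c.k₁ s) * deriv (fun t => c.k₃ t / c.k₂ t) s) :
    ∀ s : ℝ, f s * c.k₁ s = c.ε₁ * deriv (fun t => c.k₃ t / c.k₂ t) s ∧
      deriv f s = -(c.k₁ s * (c.k₃ s / c.k₂ s)) := by
  obtain ⟨U, hU0, C, hC⟩ := h
  have hε₁ : c.ε₁ ≠ 0 := by rcases c.ε₁_sign with h|h <;> rw [h] <;> norm_num
  have hε₂ : c.ε₂ ≠ 0 := by rcases c.ε₂_sign with h|h <;> rw [h] <;> norm_num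
  have hε₂sq : c.ε₂ * c.ε₂ = 1 := by rcases c.ε₂_sign with h|h <;> rw [h] <;> norm_num
  -- derivative facts for T, N, B₁, B₂ components with U
  have hdT : ∀ s, HasDerivAt (fun t => mink (c.T t) U) (mink (deriv c.T s) U) s := fun s =>
    hasDerivAt_mink_left ((c.smooth_T.differentiable (by simp) s).hasDerivAt) U
  have hdN : ∀ s, HasDerivAt (fun t => mink (c.N t) U) (mink (deriv c.N s) U) s := fun s =>
    hasDerivAt_mink_left ((c.smooth_N.differentiable (by simp) s).hasDerivAt) U
  have hdB₁ : ∀ s, HasDerivAt (fun t => mink (c.B₁ t) U) (mink (deriv c.B₁ s) U) s := fun s =>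
    hasDerivAt_mink_left ((c.smooth_B₁.differentiable (by simp) s).hasDerivAt) U
  have hdB₂ : ∀ s, HasDerivAt (fun t => mink (c.B₂ t) U) (mink (deriv c.B₂ s) U) s := fun s =>
    hasDerivAt_mink_left ((c.smooth_B₂.differentiable (by simp) s).hasDerivAt) U
  -- step 1: mink (B₁ s) U = 0
  have hc1 : ∀ s, mink (c.B₁ s) U = 0 := by
    intro s
    have h1 : HasDerivAt (fun t => mink (c.B₂ t) U) 0 s := by
      have : (fun t => mink (c.B₂ t) U) = fun _ => C := funext hC
      rw [this]; exact hasDerivAt_const s C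
    have h2 := (hdB₂ s).unique h1
    rw [c.frenet_B₂ s, mink_smul_left] at h2
    exact (mul_eq_zero.mp h2).resolve_left (mul_ne_zero hε₁ (c.k₃_ne s))
  -- step 2: mink (N s) U = -ε₂ * (k₃ s / k₂ s) * C
  have hb : ∀ s, mink (c.N s) U = -(c.ε₂ * (c.k₃ s / c.k₂ s) * C) := by
    intro s
    have h1 : HasDerivAt (fun t => mink (c.B₁ t) U) 0 s := by
      have : (fun t => mink (c.B₁ t) U) = fun _ => 0 := funext hc1
      rw [this]; exact hasDerivAt_const s 0
    have h2 := (hdB₁ s).unique h1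
    rw [c.frenet_B₁ s, mink_add_left, mink_smul_left, mink_smul_left, hC s] at h2
    -- 0 = ε₂ k₂ b + k₃ C
    have hk2 := c.k₂_ne s
    rcases c.ε₂_sign with he|he <;> rw [he] at h2 ⊢ <;> field_simp at h2 ⊢ <;> linarith
  -- smoothness of k₃ / k₂
  have hq : ∀ s, HasDerivAt (fun t => c.k₃ t / c.k₂ t)
      ((deriv c.k₃ s * c.k₂ s - c.k₃ s * deriv c.k₂ s) / (c.k₂ s)^2) s := fun s =>
    ((c.smooth_k₃.differentiable (by simp) s).hasDerivAt).div
      ((c.smooth_k₂.differentiable (by simp) s).hasDerivAt) (c.k₂_ne s)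
  set D : ℝ → ℝ := fun s => deriv (fun t => c.k₃ t / c.k₂ t) s with hD
  have hdD : ∀ s, HasDerivAt (fun t => c.k₃ t / c.k₂ t) (D s) s := fun s =>
    (hq s).differentiableAt.hasDerivAt
  -- step 3: mink (T s) U = ε₂ * C * f s  (via derivative of b)
  have ha : ∀ s, mink (c.T s) U = c.ε₂ * C * f s := by
    intro s
    have h1 : HasDerivAt (fun t => mink (c.N t) U) (-(c.ε₂ * C * D s)) s := by
      have heq : (fun t => mink (c.N t) U) = fun t => -(c.ε₂ * C) * (c.k₃ t / c.k₂ t) := by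
        funext t; rw [hb t]; ring
      rw [heq]
      simpa using (hdD s).const_mul (-(c.ε₂ * C))
    have h2 := (hdN s).unique h1
    rw [c.frenet_N s, mink_add_left, mink_smul_left, mink_smul_left, hc1 s] at h2
    -- -(ε₂ C D s) = -(ε₁ k₁) a + 0
    rw [hf s]
    have hk1 := c.k₁_ne s
    rcases c.ε₁_sign with he|he <;> rw [he] at h2 ⊢ <;>
      field_simp at h2 ⊢ <;> linarith
  -- f is ε₂ C⁻¹-multiple of a... derivative of f
  intro s
  constructor
  · have hk1 := c.k₁_ne s
    rw [hf s]; field_simp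
  · -- case split on C
    by_cases hCz : C = 0
    · -- then b ≡ 0, a' = k₁ b = 0 and b' = -ε₁ k₁ a + 0 = 0 gives a = 0; contradiction
      exfalso
      apply hU0
      have hb0 : ∀ s, mink (c.N s) U = 0 := by
        intro s; rw [hb s, hCz]; ring
      have ha0 : ∀ s, mink (c.T s) U = 0 := by
        intro s
        have h1 : HasDerivAt (fun t => mink (c.N t) U) 0 s := by
          have : (fun t => mink (c.N t) U) = fun _ => 0 := funext hb0
          rw [this]; exact hasDerivAt_const s 0
        have h2 := (hdN s).unique h1
        rw [c.frenet_N s, mink_add_left, mink_smul_left, mink_smul_left, hc1 s] at h2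
        have hk1 := c.k₁_ne s
        rcases c.ε₁_sign with he|he <;> rw [he] at h2 <;> field_simp at h2 <;>
          exact (mul_eq_zero.mp (by linarith : c.k₁ s * mink (c.T s) U = 0)).resolve_left hk1
      exact frame_nondeg c.ε₁_sign c.ε₂_sign (c.TT 0) (c.NN 0) (c.B₁B₁ 0) (c.B₂B₂ 0)
        (c.TN 0) (c.TB₁ 0) (c.TB₂ 0) (c.NB₁ 0) (c.NB₂ 0) (c.B₁B₂ 0)
        (ha0 0) (hb0 0) (hc1 0) (hC 0 ▸ hCz ▸ rfl)
    · -- C ≠ 0 : deriv f from deriv a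
      have hfa : f = fun t => (c.ε₂ * C)⁻¹ * mink (c.T t) U := by
        funext t; rw [ha t]; field_simp
      have hda : HasDerivAt (fun t => mink (c.T t) U) (mink (deriv c.T s) U) s := hdT s
      have : HasDerivAt f ((c.ε₂ * C)⁻¹ * mink (deriv c.T s) U) s := by
        rw [hfa]; exact hda.const_mul _
      rw [this.deriv]
      rw [c.frenet_T s, mink_smul_left, hb s]
      have hk2 := c.k₂_ne s
      rcases c.ε₂_sign with he|he <;> rw [he] <;> field_simp <;> ring
end
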